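/- Suppose n, m, k ∈ ℕ satisfy 2^k + 1 ≤ n ≤ 2^{k+1} and m ≥ 2^k + 1 (Player 1 has the upper hand at level k). Then the value of ``Guess Who?'' is p(n,m) = 1 − 2^k/m + (2/3)·(2^{2k} + 2)/(n·m). -/

import Mathlib

/-!
Rescale the value function to `W n m = 3 n m p(n, m)` (`scaled p n m`). The recurrence then
becomes affine, `W n m = max_{b + c = n} (3 n m - W m b - W m c)`, and `W` has two closed forms,
proved together by strong induction on `n + m`:

* upper hand, `2^k < n ≤ 2^(k+1)` and `2^k < m`: `W n m = 3 n m - 3·2^k n + 2·4^k + 4`;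
* lower hand, `m ≤ 2^j ≤ 2 m` and `2^j < n`: `W n m = 3·2^j m - 4^j - 2`.

Comparing each split with these formulas works because `y ↦ 3 x y - y²` peaks at `y = 3x/2`,
so among the powers of two it is largest at the `2^L` with `x ≤ 2^L ≤ 2x`. Halving `n` is an
optimal split in the upper-hand regime, splitting off `2^(j-1)` in the lower-hand one.
-/

namespace GuessWho

open Finset

def scaled (p : ℕ → ℕ → ℚ) (n m : ℕ) : ℚ := 3 * n * m * p n m

def upperHandValue (k n m : ℕ) : ℚ := 3 * n * m - 3 * 2 ^ k * n + 2 * 4 ^ k + 4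

def lowerHandValue (j m : ℕ) : ℚ := 3 * 2 ^ j * m - 4 ^ j - 2

def HasUpperHandValue (p : ℕ → ℕ → ℚ) (n m : ℕ) : Prop :=
  ∀ k, 2 ^ k < n → n ≤ 2 ^ (k + 1) → 2 ^ k < m → scaled p n m = upperHandValue k n m

def HasLowerHandValue (p : ℕ → ℕ → ℚ) (n m : ℕ) : Prop :=
  ∀ j, m ≤ 2 ^ j → 2 ^ j ≤ 2 * m → 2 ^ j < n → scaled p n m = lowerHandValue j m

lemma exists_two_pow_mem_Icc {x k : ℕ} (hx : 1 ≤ x) (hxk : x ≤ 2 ^ k) :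
    ∃ L ≤ k, x ≤ 2 ^ L ∧ 2 ^ L ≤ 2 * x := by
  refine ⟨Nat.clog 2 x, Nat.clog_le_of_le_pow hxk, Nat.le_pow_clog one_lt_two x, ?_⟩
  rcases hx.eq_or_lt with rfl | hx
  · simp
  · have hlt := Nat.pow_pred_clog_lt_self one_lt_two hx
    have hpos := Nat.clog_pos one_lt_two hx
    rw [← Nat.succ_pred_eq_of_pos hpos, pow_succ]
    omega

lemma four_pow_eq_two_pow_mul_self (i : ℕ) : (4 : ℚ) ^ i = 2 ^ i * 2 ^ i := by
  rw [← mul_pow]; norm_num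

lemma three_mul_two_pow_mul_sub_four_pow_le {x : ℚ} {L : ℕ} (hxL : x ≤ 2 ^ L)
    (hLx : 2 ^ L ≤ 2 * x) (j : ℕ) : 3 * 2 ^ j * x - 4 ^ j ≤ 3 * 2 ^ L * x - 4 ^ L := by
  rw [four_pow_eq_two_pow_mul_self, four_pow_eq_two_pow_mul_self]
  rcases lt_trichotomy j L with h | rfl | h
  · have : 2 * 2 ^ j ≤ (2 : ℚ) ^ L := by
      rw [← pow_succ']; exact pow_le_pow_right₀ one_le_two h
    nlinarith
  · rfl
  · have : 2 * 2 ^ L ≤ (2 : ℚ) ^ j := by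
      rw [← pow_succ']; exact pow_le_pow_right₀ one_le_two h
    nlinarith

variable {p : ℕ → ℕ → ℚ}

lemma scaled_eq_of_splits {n m : ℕ} (hn : 2 ≤ n) (hm : 2 ≤ m) {hne : (Icc 1 (n - 1)).Nonempty}
    (hpnm : p n m = (Icc 1 (n - 1)).sup' hne
      fun b => 1 - (b : ℚ) / n * p m b - ((n - b : ℕ) : ℚ) / n * p m (n - b))
    (v : ℚ)
    (hle : ∀ b c, 1 ≤ b → 1 ≤ c → b + c = n → v ≤ scaled p m b + scaled p m c)
    (hex : ∃ b c, 1 ≤ b ∧ 1 ≤ c ∧ b + c = n ∧ scaled p m b + scaled p m c = v) :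
    scaled p n m = 3 * n * m - v := by
  have payoff (b : ℕ) : 1 - (b : ℚ) / n * p m b - ((n - b : ℕ) : ℚ) / n * p m (n - b)
      = 1 - (scaled p m b + scaled p m (n - b)) / (3 * n * m) := by
    unfold scaled; field_simp; ring
  suffices p n m = 1 - v / (3 * n * m) by
    unfold scaled; rw [this]; field_simp
  rw [hpnm]
  apply le_antisymm
  · refine Finset.sup'_le _ _ fun b hb => ?_
    rw [mem_Icc] at hb
    rw [payoff]
    gcongr
    exact hle b (n - b) hb.1 (by omega) (by omega)
  · obtain ⟨b, c, hb, hc, rfl, hv⟩ := hex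
    have hmem : b ∈ Icc 1 (b + c - 1) := mem_Icc.2 ⟨hb, by omega⟩
    refine le_of_eq_of_le ?_ (Finset.le_sup' _ hmem)
    rw [payoff, Nat.add_sub_cancel_left, hv]

section Bounds

variable {m x : ℕ} (hU : HasUpperHandValue p m x) (hL : HasLowerHandValue p m x)
include hU hL

lemma lowerHandValue_le_scaled {k : ℕ} (hx : 1 ≤ x) (hxk : x ≤ 2 ^ (k + 1))
    (hkm : 2 ^ k < m) :
    lowerHandValue k x ≤ scaled p m x := by
  have hpow : 2 ^ (k + 1) = 2 * 2 ^ k := pow_succ' 2 k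
  by_cases hupper : 2 ^ k < x ∧ m ≤ 2 ^ (k + 1)
  · have hkx : (2 : ℚ) ^ k + 1 ≤ x := by exact_mod_cast hupper.1
    have hkm' : (2 : ℚ) ^ k + 1 ≤ m := by exact_mod_cast hkm
    rw [hU k hkm hupper.2 hupper.1, upperHandValue, lowerHandValue, four_pow_eq_two_pow_mul_self]
    nlinarith [mul_nonneg (sub_nonneg.2 hkx) (sub_nonneg.2 hkm')]
  · obtain ⟨L, hLm, hxL, hLx⟩ : ∃ L, 2 ^ L < m ∧ x ≤ 2 ^ L ∧ 2 ^ L ≤ 2 * x := by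
      by_cases hxk' : x ≤ 2 ^ k
      · obtain ⟨L, hLk, hxL, hLx⟩ := exists_two_pow_mem_Icc hx hxk'
        exact ⟨L, (Nat.pow_le_pow_right two_pos hLk).trans_lt hkm, hxL, hLx⟩
      · exact ⟨k + 1, by omega, hxk, by omega⟩
    rw [hL L hxL hLx hLm, lowerHandValue, lowerHandValue]
    linarith [three_mul_two_pow_mul_sub_four_pow_le (x := (x : ℚ))
      (by exact_mod_cast hxL) (by exact_mod_cast hLx) k]

lemma upperHandValue_sub_six_le_scaled {i : ℕ} (hx : 1 ≤ x) (him : 2 ^ i < m)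
    (hmi : m ≤ 2 ^ (i + 1)) : upperHandValue i m x - 6 ≤ scaled p m x := by
  by_cases hix : 2 ^ i < x
  · rw [hU i him hmi hix]; linarith
  · obtain ⟨L, hLi, hxL, hLx⟩ := exists_two_pow_mem_Icc hx (not_lt.1 hix)
    rw [hL L hxL hLx ((Nat.pow_le_pow_right two_pos hLi).trans_lt him)]
    have hxi : (x : ℚ) ≤ 2 ^ i := by exact_mod_cast not_lt.1 hix
    have him' : (2 : ℚ) ^ i ≤ m := by exact_mod_cast him.le
    have key := three_mul_two_pow_mul_sub_four_pow_le (x := (x : ℚ))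
      (by exact_mod_cast hxL) (by exact_mod_cast hLx) i
    rw [upperHandValue, lowerHandValue, four_pow_eq_two_pow_mul_self i]
    rw [four_pow_eq_two_pow_mul_self i] at key
    nlinarith [mul_nonneg (sub_nonneg.2 him') (sub_nonneg.2 hxi)]

end Bounds

variable (hrec : ∀ n m : ℕ, ∀ hn : 2 ≤ n, 2 ≤ m →
      p n m = (Icc 1 (n - 1)).sup' (nonempty_Icc.mpr (Nat.le_sub_one_of_lt hn))
        (fun b => 1 - (b : ℚ) / (n : ℚ) * p m b
          - ((n - b : ℕ) : ℚ) / (n : ℚ) * p m (n - b)))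
include hrec

lemma hasUpperHandValue_of_lt {n m : ℕ}
    (ih : ∀ b < n, HasUpperHandValue p m b ∧ HasLowerHandValue p m b) :
    HasUpperHandValue p n m := by
  intro k hkn hnk hkm
  have hpow : 2 ^ (k + 1) = 2 * 2 ^ k := pow_succ' 2 k
  rw [scaled_eq_of_splits (by omega) (by omega) (hrec n m (by omega) (by omega))
    (3 * 2 ^ k * n - 2 * 4 ^ k - 4)]
  · rw [upperHandValue]; ring
  · intro b c hb hc hbc
    have hb' := lowerHandValue_le_scaled (ih b (by omega)).1 (ih b (by omega)).2 hb (by omega) hkm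
    have hc' := lowerHandValue_le_scaled (ih c (by omega)).1 (ih c (by omega)).2 hc (by omega) hkm
    have hbc' : (b : ℚ) + c = n := by exact_mod_cast hbc
    rw [lowerHandValue] at hb' hc'
    linear_combination hb' + hc' - 3 * 2 ^ k * hbc'
  · refine ⟨n / 2, n - n / 2, by omega, by omega, by omega, ?_⟩
    rw [(ih _ (by omega)).2 k (by omega) (by omega) (by omega),
      (ih _ (by omega)).2 k (by omega) (by omega) (by omega), lowerHandValue, lowerHandValue]
    have hsum : ((n / 2 : ℕ) : ℚ) + ((n - n / 2 : ℕ) : ℚ) = n := by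
      exact_mod_cast (by omega : n / 2 + (n - n / 2) = n)
    linear_combination 3 * 2 ^ k * hsum

lemma scaled_eq_lowerHandValue_of_lt {n m j : ℕ} (hm : 2 ≤ m)
    (ih : ∀ b < n, HasUpperHandValue p m b ∧ HasLowerHandValue p m b)
    (hmj : m ≤ 2 ^ j) (hjm : 2 ^ j < 2 * m) (hjn : 2 ^ j < n) :
    scaled p n m = lowerHandValue j m := by
  obtain ⟨i, rfl⟩ : ∃ i, j = i + 1 :=
    Nat.exists_eq_succ_of_ne_zero fun h => by rw [h, pow_zero] at hmj; omega
  have hpow : 2 ^ (i + 1) = 2 * 2 ^ i := pow_succ' 2 i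
  have him : 2 ^ i < m := by omega
  have hrest (c : ℕ) (hc : 2 ^ i < c) (hcn : c < n) : scaled p m c = upperHandValue i m c :=
    (ih c hcn).1 i him hmj hc
  rw [scaled_eq_of_splits (by omega) hm (hrec n m (by omega) hm)
    (3 * n * m - lowerHandValue (i + 1) m)]
  · ring
  · intro b c hb hc hbc
    have hbc' : (b : ℚ) + c = n := by exact_mod_cast hbc
    -- since `n > 2^(i+1)`, one part of every split exceeds `2^i`
    wlog hic : 2 ^ i < c generalizing b c
    · have := this c b hc hb (by omega) (by linarith) (by omega)
      linarith
    have hb' := upperHandValue_sub_six_le_scaled (ih b (by omega)).1 (ih b (by omega)).2 hb him hmj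
    rw [hrest c hic (by omega)]
    simp only [upperHandValue, lowerHandValue, pow_succ] at hb' ⊢
    linear_combination hb' - 3 * m * hbc'
  · refine ⟨2 ^ i, n - 2 ^ i, Nat.one_le_two_pow, by omega, by omega, ?_⟩
    rw [(ih _ (by omega)).2 i le_rfl (by omega) him, hrest _ (by omega) (by omega)]
    have hsum : ((2 ^ i : ℕ) : ℚ) + ((n - 2 ^ i : ℕ) : ℚ) = n := by
      exact_mod_cast (by omega : 2 ^ i + (n - 2 ^ i) = n)
    rw [upperHandValue, lowerHandValue, lowerHandValue, pow_succ, pow_succ,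
      four_pow_eq_two_pow_mul_self]
    push_cast at hsum ⊢
    linear_combination 3 * m * hsum

lemma hasLowerHandValue_of_lt (hp2 : ∀ n : ℕ, 2 ≤ n → p n 1 = 0) {n m : ℕ}
    (ih : ∀ b < n, HasUpperHandValue p m b ∧ HasLowerHandValue p m b) :
    HasLowerHandValue p n m := by
  intro j hmj hjm hjn
  rcases (show m = 1 ∨ 2 ≤ m by have := Nat.two_pow_pos j; omega) with rfl | hm
  · obtain rfl | rfl : j = 0 ∨ j = 1 := by
      have : 2 ^ j ≤ 2 ^ 1 := by simpa using hjm
      have := (Nat.pow_le_pow_iff_right one_lt_two).1 this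
      omega
    all_goals simp [scaled, lowerHandValue, hp2 n (by omega)]; norm_num
  rcases hjm.lt_or_eq with hjm | hjm
  · exact scaled_eq_lowerHandValue_of_lt hrec hm ih hmj hjm hjn
  -- at `m = 2^(j-1)` the levels `j - 1` and `j` give the same value
  obtain ⟨i, rfl⟩ : ∃ i, j = i + 1 :=
    Nat.exists_eq_succ_of_ne_zero fun h => by rw [h, pow_zero] at hjm; omega
  have hmi : m = 2 ^ i := by rw [pow_succ] at hjm; omega
  rw [scaled_eq_lowerHandValue_of_lt hrec hm ih hmi.le (by omega) (by omega)]
  rw [lowerHandValue, lowerHandValue, pow_succ, pow_succ, four_pow_eq_two_pow_mul_self, hmi]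
  push_cast
  ring

lemma hasUpperHandValue_and_hasLowerHandValue (hp2 : ∀ n : ℕ, 2 ≤ n → p n 1 = 0)
    (n m : ℕ) :
    HasUpperHandValue p n m ∧ HasLowerHandValue p n m := by
  induction hN : n + m using Nat.strong_induction_on generalizing n m with
  | _ N ih =>
    have ih' : ∀ b < n, HasUpperHandValue p m b ∧ HasLowerHandValue p m b :=
      fun b hb => ih (m + b) (by omega) m b rfl
    exact ⟨hasUpperHandValue_of_lt hrec ih', hasLowerHandValue_of_lt hrec hp2 ih'⟩

end GuessWho

open GuessWho in
/-- The value of "Guess Who?" when Player 1 has the upper hand at level `k`: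
if `p` is the value function of the game (characterized by its recurrence),
`2^k + 1 ≤ n ≤ 2^(k+1)` and `m ≥ 2^k + 1`, then
`p n m = 1 − 2^k/m + (2/3)·(2^(2k)+2)/(n·m)`. -/
theorem guess_who_value_upper_hand
    (p : ℕ → ℕ → ℚ)
    (hp2 : ∀ n : ℕ, 2 ≤ n → p n 1 = 0)
    (hrec : ∀ n m : ℕ, ∀ hn : 2 ≤ n, 2 ≤ m →
      p n m = (Finset.Icc 1 (n - 1)).sup' (Finset.nonempty_Icc.mpr (by omega))
        (fun b => 1 - (b : ℚ) / (n : ℚ) * p m b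
          - ((n - b : ℕ) : ℚ) / (n : ℚ) * p m (n - b)))
    (n m k : ℕ) (hn1 : 2 ^ k + 1 ≤ n) (hn2 : n ≤ 2 ^ (k + 1)) (hm : 2 ^ k + 1 ≤ m) :
    p n m = 1 - 2 ^ k / (m : ℚ) + 2 / 3 * (2 ^ (2 * k) + 2) / ((n : ℚ) * (m : ℚ)) := by
  have h := (hasUpperHandValue_and_hasLowerHandValue hrec hp2 n m).1 k (by omega) hn2 (by omega)
  have hn0 : (n : ℚ) ≠ 0 := Nat.cast_ne_zero.2 (by omega)
  have hm0 : (m : ℚ) ≠ 0 := Nat.cast_ne_zero.2 (by omega)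
  rw [scaled, upperHandValue] at h
  rw [pow_mul]
  field_simp
  linear_combination h
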